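/- arXiv:2507.08295 — 3 statements merged into one kernel-verified Lean document; each statement's English description precedes it below -/
import Mathlib

section
/- Let Ω ⊂ ℝⁿ be a domain, D ⊂ ∂Ω closed with D × ℝ an n-set in ℝ^{n+1}, and define Ω_D := (Ω×{0}) ∪ (D×ℝ). Let s ∈ (0,1), p ∈ (1,∞), and let f ∈ L^p(Ω) satisfy the weighted bound ∫_Ω |f|^p dist(·,D)^{−sp} dx < ∞ together with finite Gagliardo seminorm on Ω. Define the zero extension E₀f on Ω_D by E₀f(x,0) = f(x) for x ∈ Ω and E₀f ≡ 0 on D × ℝ. Then ‖E₀f‖_{W^{s,p}(Ω_D)} ≤ C (‖f‖_{L^p(Ω)} + [f]_{W^{s,p}(Ω)} + (∫_Ω |f|^p dist(·,D)^{−sp})^{1/p}), where the norm on Ω_D uses the measure H^n and kernel |x−y|^{−(n+sp)} (written as |x−y|^{n−sp} exponent normalization in the Jonsson–Wallin convention on n-sets of ℝ^{n+1}). -/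
/-!
On `Ω × {0}` the measure `μH[n]` is the isometric image of `μH[n]` on `ℝⁿ`, a constant multiple
of Lebesgue measure, and `E₀f` vanishes on `D × ℝ`. So the `Lᵖ` norm and the `Ω × Ω` part of the
Gagliardo seminorm of `E₀f` are those of `f` up to that constant, the `(D × ℝ)²` part vanishes, and
the two cross terms equal `∫_Ω |f x|ᵖ ∫_{D×ℝ} |(x, 0) - w|^{-(n+sp)} dw dx`. Because `D × ℝ` carries
at most `A rⁿ` of mass in balls of radius `r` centred on it, cutting it into dyadic annuli
`2ᵏ δ ≤ |(x, 0) - w| < 2ᵏ⁺¹ δ` with `δ = dist(x, D)` bounds the inner integral by a geometric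
series `≲ δ^{-sp}`.
-/

open Metric Set MeasureTheory
open scoped ENNReal Classical

/-- The isometric embedding `(x, t) ↦ (x₁, …, xₙ, t)` of `ℝⁿ × ℝ` into `ℝ^{n+1}`. -/
noncomputable def emb (n : ℕ) (x : EuclideanSpace ℝ (Fin n)) (t : ℝ) :
    EuclideanSpace ℝ (Fin (n + 1)) :=
  (EuclideanSpace.equiv (Fin (n + 1)) ℝ).symm (Fin.snoc (fun i => x i) t)

/-- The projection `ℝ^{n+1} → ℝⁿ` onto the first `n` coordinates. -/
noncomputable def projInit (n : ℕ) (z : EuclideanSpace ℝ (Fin (n + 1))) :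
    EuclideanSpace ℝ (Fin n) :=
  (EuclideanSpace.equiv (Fin n) ℝ).symm (fun i => z i.castSucc)

open scoped NNReal

section UpperAhlforsRegular

variable {X : Type*} [PseudoMetricSpace X] [MeasurableSpace X]

/-- The upper half of the `d`-set condition of Jonsson and Wallin. -/
def IsUpperAhlforsRegular (μ : Measure X) (S : Set X) (A d : ℝ) : Prop :=
  ∀ z ∈ S, ∀ r : ℝ, 0 < r → μ (S ∩ ball z r) ≤ ENNReal.ofReal (A * r ^ d)

variable {μ : Measure X} {S : Set X} {A d : ℝ}

namespace IsUpperAhlforsRegular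

lemma measure_inter_ball_le (h : IsUpperAhlforsRegular μ S A d) {z z' : X} (hz' : z' ∈ S)
    {R R' : ℝ} (hR' : 0 < R') (hle : R + dist z z' ≤ R') :
    μ (S ∩ ball z R) ≤ ENNReal.ofReal (A * R' ^ d) :=
  (measure_mono (inter_subset_inter_right S (ball_subset_ball' hle))).trans (h z' hz' R' hR')

lemma sigmaFinite_restrict [OpensMeasurableSpace X] (h : IsUpperAhlforsRegular μ S A d) :
    SigmaFinite (μ.restrict S) := by
  rcases S.eq_empty_or_nonempty with rfl | ⟨z, hz⟩
  · rw [Measure.restrict_empty]; infer_instance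
  refine ⟨⟨⟨fun k : ℕ => ball z (k + 1), fun _ => trivial, fun k => ?_, ?_⟩⟩⟩
  · rw [Measure.restrict_apply measurableSet_ball, inter_comm]
    exact (h z hz _ (by positivity)).trans_lt ENNReal.ofReal_lt_top
  · exact eq_univ_of_subset (iUnion_mono fun k => ball_subset_ball (by linarith))
      (iUnion_ball_nat z)

theorem lintegral_inv_dist_rpow_le (h : IsUpperAhlforsRegular μ S A d) {t : ℝ}
    (hdt : 0 ≤ d + t) {z : X} (hz : 0 < infDist z S) :
    ∫⁻ w in S, ENNReal.ofReal ((dist z w ^ (d + t))⁻¹) ∂μ ≤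
      ENNReal.ofReal (A * 4 ^ d) * (1 - ENNReal.ofReal ((2 ^ t)⁻¹))⁻¹ *
        ENNReal.ofReal ((infDist z S ^ t)⁻¹) := by
  set δ := infDist z S
  have hS : S.Nonempty := nonempty_iff_ne_empty.2 fun hS => by simp [δ, hS] at hz
  obtain ⟨z', hz'S, hzz'⟩ := (infDist_lt_iff hS).1 (by linarith : δ < 2 * δ)
  set annulus : ℕ → Set X := fun k => S ∩ {w | 2 ^ k * δ ≤ dist z w ∧ dist z w < 2 ^ (k + 1) * δ}
  have hcover : S ⊆ ⋃ k, annulus k := by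
    intro w hw
    have h1 : 1 ≤ dist z w / δ := (one_le_div hz).2 (infDist_le_dist_of_mem hw)
    obtain ⟨k, hk, hk'⟩ := exists_nat_pow_near h1 one_lt_two
    exact mem_iUnion.2 ⟨k, hw, (le_div_iff₀ hz).1 hk, (div_lt_iff₀ hz).1 hk'⟩
  have hannulus : ∀ k : ℕ, ∫⁻ w in annulus k, ENNReal.ofReal ((dist z w ^ (d + t))⁻¹) ∂μ ≤
      ENNReal.ofReal (A * 4 ^ d) * ENNReal.ofReal ((δ ^ t)⁻¹) * ENNReal.ofReal ((2 ^ t)⁻¹) ^ k := by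
    intro k
    set r : ℝ := 2 ^ k * δ
    have hr : 0 < r := by positivity
    -- the annulus lies in the ball of radius `4 r` around the point `z'` of `S` near `z`
    have hmeas : μ (annulus k) ≤ ENNReal.ofReal (A * (4 * r) ^ d) := by
      have hsub : annulus k ⊆ S ∩ ball z (2 ^ (k + 1) * δ) := fun w hw => ⟨hw.1, mem_ball'.2 hw.2.2⟩
      refine (measure_mono hsub).trans (h.measure_inter_ball_le hz'S (by positivity) ?_)
      linarith [show (2:ℝ) ^ (k + 1) * δ = 2 * r by ring, show 2 * δ ≤ 2 * r by
        nlinarith [one_le_pow₀ (M₀ := ℝ) (n := k) one_le_two]]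
    have hscale : (r ^ (d + t))⁻¹ * (A * (4 * r) ^ d) = A * 4 ^ d * (r ^ t)⁻¹ := by
      rw [Real.rpow_add hr, Real.mul_rpow (by norm_num) hr.le]
      field_simp
    have hdyadic : (r ^ t)⁻¹ = (δ ^ t)⁻¹ * ((2 ^ t)⁻¹) ^ k := by
      rw [Real.mul_rpow (by positivity) hz.le, ← Real.rpow_pow_comm (by norm_num), inv_pow,
        mul_inv, mul_comm]
    calc ∫⁻ w in annulus k, ENNReal.ofReal ((dist z w ^ (d + t))⁻¹) ∂μ
        ≤ ∫⁻ w in annulus k, ENNReal.ofReal ((r ^ (d + t))⁻¹) ∂μ :=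
          setLIntegral_mono measurable_const fun w hw => ENNReal.ofReal_le_ofReal <|
            inv_anti₀ (by positivity) (Real.rpow_le_rpow hr.le hw.2.1 hdt)
      _ = ENNReal.ofReal ((r ^ (d + t))⁻¹) * μ (annulus k) := setLIntegral_const _ _
      _ ≤ ENNReal.ofReal ((r ^ (d + t))⁻¹) * ENNReal.ofReal (A * (4 * r) ^ d) := by gcongr
      _ = _ := by
        have hδt : 0 ≤ (δ ^ t)⁻¹ := by positivity
        rw [← ENNReal.ofReal_mul (by positivity), hscale, hdyadic,
          ENNReal.ofReal_mul' (by positivity), ENNReal.ofReal_mul hδt,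
          ENNReal.ofReal_pow (by positivity), mul_assoc]
  calc ∫⁻ w in S, ENNReal.ofReal ((dist z w ^ (d + t))⁻¹) ∂μ
      ≤ ∫⁻ w in ⋃ k, annulus k, ENNReal.ofReal ((dist z w ^ (d + t))⁻¹) ∂μ :=
        lintegral_mono' (Measure.restrict_mono hcover le_rfl) le_rfl
    _ ≤ ∑' k, ∫⁻ w in annulus k, ENNReal.ofReal ((dist z w ^ (d + t))⁻¹) ∂μ :=
        lintegral_iUnion_le _ _
    _ ≤ ∑' k : ℕ, ENNReal.ofReal (A * 4 ^ d) * ENNReal.ofReal ((δ ^ t)⁻¹) *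
          ENNReal.ofReal ((2 ^ t)⁻¹) ^ k := ENNReal.tsum_le_tsum hannulus
    _ = _ := by rw [ENNReal.tsum_mul_left, ENNReal.tsum_geometric, mul_right_comm]

end IsUpperAhlforsRegular

end UpperAhlforsRegular

theorem Isometry.setLIntegral_image_hausdorffMeasure {X Y : Type*} [EMetricSpace X]
    [MeasurableSpace X] [BorelSpace X] [CompleteSpace X] [EMetricSpace Y] [MeasurableSpace Y]
    [BorelSpace Y] {f : X → Y} (hf : Isometry f) {d : ℝ} (hd : 0 ≤ d) (s : Set X)
    (g : Y → ℝ≥0∞) :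
    ∫⁻ y in f '' s, g y ∂μH[d] = ∫⁻ x in s, g (f x) ∂μH[d] := by
  have hfm := hf.isClosedEmbedding.measurableEmbedding
  have hmap : (μH[d].restrict s).map f = (μH[d] : Measure Y).restrict (f '' s) := by
    conv_lhs => rw [← preimage_image_eq s hf.injective]
    rw [← hfm.restrict_map, hf.map_hausdorffMeasure (Or.inl hd),
      Measure.restrict_restrict_of_subset (image_subset_range f s)]
  rw [← hmap, hfm.lintegral_map]

theorem Isometry.sFinite_restrict_image_hausdorffMeasure {X Y : Type*} [EMetricSpace X]
    [MeasurableSpace X] [BorelSpace X] [EMetricSpace Y] [MeasurableSpace Y]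
    [BorelSpace Y] {f : X → Y} (hf : Isometry f) {d : ℝ} (hd : 0 ≤ d)
    [SFinite (μH[d] : Measure X)] (s : Set X) :
    SFinite ((μH[d] : Measure Y).restrict (f '' s)) := by
  rw [← Measure.restrict_restrict_of_subset (image_subset_range f s),
    ← hf.map_hausdorffMeasure (Or.inl hd)]
  infer_instance

section SymmetricKernel

variable {X : Type*} [MeasurableSpace X] {μ : Measure X} {P S : Set X}
  [SFinite (μ.restrict P)] [SFinite (μ.restrict S)]

theorem lintegral_lintegral_union_le_of_symm {G : X → X → ℝ≥0∞}
    (hG : Measurable (Function.uncurry G)) (hsymm : ∀ z w, G z w = G w z) :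
    ∫⁻ z in P ∪ S, ∫⁻ w in P ∪ S, G z w ∂μ ∂μ ≤
      ∫⁻ z in P, ∫⁻ w in P, G z w ∂μ ∂μ + 2 * ∫⁻ z in P, ∫⁻ w in S, G z w ∂μ ∂μ +
        ∫⁻ z in S, ∫⁻ w in S, G z w ∂μ ∂μ := by
  have hP : Measurable fun z => ∫⁻ w in P, G z w ∂μ := hG.lintegral_prod_right'
  have hswap : ∫⁻ z in S, ∫⁻ w in P, G z w ∂μ ∂μ = ∫⁻ z in P, ∫⁻ w in S, G z w ∂μ ∂μ := by
    rw [lintegral_lintegral_swap hG.aemeasurable]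
    simp_rw [hsymm]
  calc ∫⁻ z in P ∪ S, ∫⁻ w in P ∪ S, G z w ∂μ ∂μ
      ≤ ∫⁻ z in P ∪ S, (∫⁻ w in P, G z w ∂μ + ∫⁻ w in S, G z w ∂μ) ∂μ :=
        lintegral_mono fun z => lintegral_union_le _ _ _
    _ ≤ ∫⁻ z in P, (∫⁻ w in P, G z w ∂μ + ∫⁻ w in S, G z w ∂μ) ∂μ +
          ∫⁻ z in S, (∫⁻ w in P, G z w ∂μ + ∫⁻ w in S, G z w ∂μ) ∂μ := lintegral_union_le _ _ _
    _ = _ := by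
      rw [lintegral_add_left hP, lintegral_add_left hP, hswap]
      ring

end SymmetricKernel

theorem ENNReal.inv_one_sub_ofReal_inv_two_rpow_ne_top {t : ℝ} (ht : 0 < t) :
    (1 - ENNReal.ofReal ((2 ^ t)⁻¹))⁻¹ ≠ ⊤ :=
  ENNReal.inv_ne_top.2 (tsub_pos_of_lt (ENNReal.ofReal_lt_one.2
    (inv_lt_one_of_one_lt₀ (Real.one_lt_rpow _root_.one_lt_two ht)))).ne'

theorem ENNReal.exists_pos_rpow_add_rpow_le {q : ℝ} (hq0 : 0 ≤ q) (hq1 : q ≤ 1)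
    {B₁ B₂ B₃ : ℝ≥0∞} (h₁ : B₁ ≠ ⊤) (h₂ : B₂ ≠ ⊤) (h₃ : B₃ ≠ ⊤) :
    ∃ C : ℝ, 0 < C ∧ ∀ a b x y z : ℝ≥0∞, a ≤ B₁ * x → b ≤ B₂ * y + B₃ * z →
      a ^ q + b ^ q ≤ ENNReal.ofReal C * (x ^ q + y ^ q + z ^ q) := by
  set B := B₁ + B₂ + B₃ + 1
  have hB : B ≠ ⊤ := by finiteness
  refine ⟨B.toReal ^ q, Real.rpow_pos_of_pos (ENNReal.toReal_pos (by positivity) hB) q,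
    fun a b x y z ha hb => ?_⟩
  rw [← ENNReal.ofReal_rpow_of_nonneg ENNReal.toReal_nonneg hq0, ENNReal.ofReal_toReal hB]
  have h₁B : B₁ ≤ B := le_add_right (le_add_right le_self_add)
  have h₂B : B₂ ≤ B := le_add_right (le_add_right le_add_self)
  have h₃B : B₃ ≤ B := le_add_right le_add_self
  calc a ^ q + b ^ q ≤ (B * x) ^ q + (B * y + B * z) ^ q := by
        gcongr
        exacts [ha.trans (by gcongr), hb.trans (by gcongr)]
    _ = B ^ q * (x ^ q + (y + z) ^ q) := by
        rw [← mul_add, ENNReal.mul_rpow_of_nonneg _ _ hq0, ENNReal.mul_rpow_of_nonneg _ _ hq0,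
          mul_add]
    _ ≤ B ^ q * (x ^ q + y ^ q + z ^ q) := by
        rw [add_assoc]
        gcongr
        exact ENNReal.rpow_add_le_add_rpow _ _ hq0 hq1

section Embedding

variable {n : ℕ}

@[simp]
lemma emb_castSucc (x : EuclideanSpace ℝ (Fin n)) (t : ℝ) (i : Fin n) :
    emb n x t i.castSucc = x i := by
  simp [emb]

@[simp]
lemma emb_last (x : EuclideanSpace ℝ (Fin n)) (t : ℝ) : emb n x t (Fin.last n) = t := by
  simp [emb]

@[simp]
lemma projInit_emb (x : EuclideanSpace ℝ (Fin n)) (t : ℝ) : projInit n (emb n x t) = x := by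
  ext i; simp [projInit]

lemma emb_projInit (w : EuclideanSpace ℝ (Fin (n + 1))) :
    emb n (projInit n w) (w (Fin.last n)) = w := by
  ext i
  induction i using Fin.lastCases with
  | last => simp
  | cast j => simp [projInit]

lemma continuous_projInit : Continuous (projInit n) := by
  unfold projInit; fun_prop

lemma dist_emb (x y : EuclideanSpace ℝ (Fin n)) (t u : ℝ) :
    dist (emb n x t) (emb n y u) = √(dist x y ^ 2 + dist t u ^ 2) := by
  rw [EuclideanSpace.dist_eq, EuclideanSpace.dist_eq x, Fin.sum_univ_castSucc,
    Real.sq_sqrt (by positivity)]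
  simp

lemma isometry_emb (t : ℝ) : Isometry fun x : EuclideanSpace ℝ (Fin n) => emb n x t :=
  Isometry.of_dist_eq fun x y => by simp [dist_emb]

lemma dist_projInit_le_dist_emb (x : EuclideanSpace ℝ (Fin n)) (t : ℝ)
    (w : EuclideanSpace ℝ (Fin (n + 1))) : dist x (projInit n w) ≤ dist (emb n x t) w := by
  conv_rhs => rw [← emb_projInit w, dist_emb]
  exact Real.le_sqrt_of_sq_le (le_add_of_nonneg_right (sq_nonneg _))

lemma setOf_emb_eq_preimage_projInit (D : Set (EuclideanSpace ℝ (Fin n))) :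
    {w | ∃ x ∈ D, ∃ t : ℝ, w = emb n x t} = projInit n ⁻¹' D := by
  ext w
  constructor
  · rintro ⟨x, hx, t, rfl⟩
    simpa using hx
  · exact fun hw => ⟨projInit n w, hw, w (Fin.last n), (emb_projInit w).symm⟩

lemma setOf_emb_eq_image (Ω : Set (EuclideanSpace ℝ (Fin n))) (t : ℝ) :
    {w | ∃ x ∈ Ω, w = emb n x t} = (emb n · t) '' Ω := by
  ext w
  simp [eq_comm]

lemma infDist_le_infDist_emb_preimage_projInit (x : EuclideanSpace ℝ (Fin n))
    (D : Set (EuclideanSpace ℝ (Fin n))) :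
    infDist x D ≤ infDist (emb n x 0) (projInit n ⁻¹' D) := by
  rcases D.eq_empty_or_nonempty with rfl | ⟨y, hy⟩
  · rw [infDist_empty]; exact infDist_nonneg
  have hy' : emb n y 0 ∈ projInit n ⁻¹' D := by rw [mem_preimage, projInit_emb]; exact hy
  refine (le_infDist ⟨_, hy'⟩).2 fun w (hw : projInit n w ∈ D) => ?_
  exact (infDist_le_dist_of_mem hw).trans (dist_projInit_le_dist_emb x 0 w)

theorem lintegral_inv_dist_emb_rpow_le {μ : Measure (EuclideanSpace ℝ (Fin (n + 1)))}
    {D : Set (EuclideanSpace ℝ (Fin n))} {A d t : ℝ}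
    (hreg : IsUpperAhlforsRegular μ (projInit n ⁻¹' D) A d) (hD : IsClosed D) (hdt : 0 ≤ d + t)
    (ht : 0 ≤ t) {x : EuclideanSpace ℝ (Fin n)} (hx : x ∉ D) :
    ∫⁻ w in projInit n ⁻¹' D, ENNReal.ofReal ((dist (emb n x 0) w ^ (d + t))⁻¹) ∂μ ≤
      ENNReal.ofReal (A * 4 ^ d) * (1 - ENNReal.ofReal ((2 ^ t)⁻¹))⁻¹ *
        ENNReal.ofReal ((infDist x D ^ t)⁻¹) := by
  rcases D.eq_empty_or_nonempty with rfl | hD₀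
  · simp
  have hx₀ : 0 < infDist x D := (hD.notMem_iff_infDist_pos hD₀).1 hx
  have hle := infDist_le_infDist_emb_preimage_projInit x D
  refine (hreg.lintegral_inv_dist_rpow_le hdt (hx₀.trans_le hle)).trans ?_
  gcongr

theorem setLIntegral_mul_lintegral_inv_dist_emb_rpow_le
    {μ : Measure (EuclideanSpace ℝ (Fin (n + 1)))} {ν : Measure (EuclideanSpace ℝ (Fin n))}
    {Ω D : Set (EuclideanSpace ℝ (Fin n))} {A d t p : ℝ}
    (hreg : IsUpperAhlforsRegular μ (projInit n ⁻¹' D) A d) (hΩ : MeasurableSet Ω)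
    (hD : IsClosed D) (hDΩ : Disjoint D Ω) (hdt : 0 ≤ d + t) (ht : 0 < t)
    (f : EuclideanSpace ℝ (Fin n) → ℝ) :
    ∫⁻ x in Ω, ENNReal.ofReal (|f x| ^ p) *
        ∫⁻ w in projInit n ⁻¹' D, ENNReal.ofReal ((dist (emb n x 0) w ^ (d + t))⁻¹) ∂μ ∂ν ≤
      ENNReal.ofReal (A * 4 ^ d) * (1 - ENNReal.ofReal ((2 ^ t)⁻¹))⁻¹ *
        ∫⁻ x in Ω, ENNReal.ofReal (|f x| ^ p / infDist x D ^ t) ∂ν := by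
  rw [← lintegral_const_mul' _ _
    (ENNReal.mul_ne_top ENNReal.ofReal_ne_top (ENNReal.inv_one_sub_ofReal_inv_two_rpow_ne_top ht))]
  refine setLIntegral_mono' hΩ fun x hx => ?_
  calc _ ≤ ENNReal.ofReal (|f x| ^ p) * (ENNReal.ofReal (A * 4 ^ d) *
        (1 - ENNReal.ofReal ((2 ^ t)⁻¹))⁻¹ * ENNReal.ofReal ((infDist x D ^ t)⁻¹)) := by
        gcongr
        exact lintegral_inv_dist_emb_rpow_le hreg hD hdt ht.le (hDΩ.notMem_of_mem_right hx)
    _ = _ := by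
        rw [div_eq_mul_inv, ENNReal.ofReal_mul (by positivity : (0 : ℝ) ≤ |f x| ^ p)]
        ring

end Embedding

section ZeroExtension

variable {n : ℕ} {Ω D : Set (EuclideanSpace ℝ (Fin n))} {f : EuclideanSpace ℝ (Fin n) → ℝ}

noncomputable def zeroExt (Ω : Set (EuclideanSpace ℝ (Fin n))) (f : EuclideanSpace ℝ (Fin n) → ℝ)
    (z : EuclideanSpace ℝ (Fin (n + 1))) : ℝ :=
  if z (Fin.last n) = 0 ∧ projInit n z ∈ Ω then f (projInit n z) else 0

lemma zeroExt_emb {x : EuclideanSpace ℝ (Fin n)} (hx : x ∈ Ω) : zeroExt Ω f (emb n x 0) = f x := by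
  simp [zeroExt, hx]

lemma zeroExt_of_mem_preimage (hDΩ : Disjoint D Ω) {z : EuclideanSpace ℝ (Fin (n + 1))}
    (hz : z ∈ projInit n ⁻¹' D) : zeroExt Ω f z = 0 :=
  if_neg fun h => hDΩ.notMem_of_mem_left hz h.2

lemma measurable_zeroExt (hΩ : MeasurableSet Ω) (hf : Measurable f) : Measurable (zeroExt Ω f) :=
  Measurable.ite ((measurableSet_singleton 0).preimage (by fun_prop) |>.inter
      (hΩ.preimage continuous_projInit.measurable))
    (hf.comp continuous_projInit.measurable) measurable_const

lemma setLIntegral_zeroExt_le (hΩ : MeasurableSet Ω) (hD : IsClosed D) (hDΩ : Disjoint D Ω)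
    {g : ℝ → ℝ≥0∞} (hg : g 0 = 0) :
    ∫⁻ z in (emb n · 0) '' Ω ∪ projInit n ⁻¹' D, g (zeroExt Ω f z) ∂μH[n] ≤
      ∫⁻ x in Ω, g (f x) ∂μH[n] := by
  have hS : ∫⁻ z in projInit n ⁻¹' D, g (zeroExt Ω f z) ∂μH[n] = 0 :=
    setLIntegral_eq_zero (hD.preimage continuous_projInit).measurableSet fun z hz => by
      simp [zeroExt_of_mem_preimage hDΩ hz, hg]
  have hP : ∫⁻ z in (emb n · 0) '' Ω, g (zeroExt Ω f z) ∂μH[n] = ∫⁻ x in Ω, g (f x) ∂μH[n] := by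
    rw [(isometry_emb 0).setLIntegral_image_hausdorffMeasure (Nat.cast_nonneg n)]
    exact setLIntegral_congr_fun hΩ fun x hx => by simp [zeroExt_emb hx]
  exact (lintegral_union_le _ _ _).trans (by rw [hP, hS, add_zero])

theorem lintegral_lintegral_zeroExt_le (hΩ : MeasurableSet Ω) (hD : IsClosed D)
    (hDΩ : Disjoint D Ω) (hf : Measurable f) {p : ℝ} (hp : p ≠ 0) (α : ℝ)
    [SFinite ((μH[n] : Measure (EuclideanSpace ℝ (Fin (n + 1)))).restrict (projInit n ⁻¹' D))] :
    ∫⁻ z in (emb n · 0) '' Ω ∪ projInit n ⁻¹' D, ∫⁻ w in (emb n · 0) '' Ω ∪ projInit n ⁻¹' D,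
        ENNReal.ofReal (|zeroExt Ω f z - zeroExt Ω f w| ^ p / dist z w ^ α) ∂μH[n] ∂μH[n] ≤
      ∫⁻ x in Ω, ∫⁻ y in Ω, ENNReal.ofReal (|f x - f y| ^ p / dist x y ^ α) ∂μH[n] ∂μH[n] +
        2 * ∫⁻ x in Ω, ENNReal.ofReal (|f x| ^ p) *
          ∫⁻ w in projInit n ⁻¹' D, ENNReal.ofReal ((dist (emb n x 0) w ^ α)⁻¹) ∂μH[n] ∂μH[n] := by
  have hS : MeasurableSet (projInit n ⁻¹' D) := (hD.preimage continuous_projInit).measurableSet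
  have hemb := isometry_emb (n := n) 0
  have := hemb.sFinite_restrict_image_hausdorffMeasure (Nat.cast_nonneg n) Ω
  have hF := measurable_zeroExt hΩ hf
  have hG : Measurable (Function.uncurry fun z w : EuclideanSpace ℝ (Fin (n + 1)) =>
      ENNReal.ofReal (|zeroExt Ω f z - zeroExt Ω f w| ^ p / dist z w ^ α)) := by
    fun_prop
  have hPP : ∫⁻ z in (emb n · 0) '' Ω, ∫⁻ w in (emb n · 0) '' Ω,
      ENNReal.ofReal (|zeroExt Ω f z - zeroExt Ω f w| ^ p / dist z w ^ α) ∂μH[n] ∂μH[n] =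
      ∫⁻ x in Ω, ∫⁻ y in Ω, ENNReal.ofReal (|f x - f y| ^ p / dist x y ^ α) ∂μH[n] ∂μH[n] := by
    rw [hemb.setLIntegral_image_hausdorffMeasure (Nat.cast_nonneg n)]
    refine setLIntegral_congr_fun hΩ fun x hx => ?_
    rw [hemb.setLIntegral_image_hausdorffMeasure (Nat.cast_nonneg n)]
    exact setLIntegral_congr_fun hΩ fun y hy => by
      simp only [zeroExt_emb hx, zeroExt_emb hy, hemb.dist_eq]
  have hPS : ∫⁻ z in (emb n · 0) '' Ω, ∫⁻ w in projInit n ⁻¹' D,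
      ENNReal.ofReal (|zeroExt Ω f z - zeroExt Ω f w| ^ p / dist z w ^ α) ∂μH[n] ∂μH[n] =
      ∫⁻ x in Ω, ENNReal.ofReal (|f x| ^ p) *
        ∫⁻ w in projInit n ⁻¹' D, ENNReal.ofReal ((dist (emb n x 0) w ^ α)⁻¹) ∂μH[n] ∂μH[n] := by
    rw [hemb.setLIntegral_image_hausdorffMeasure (Nat.cast_nonneg n)]
    refine setLIntegral_congr_fun hΩ fun x hx => ?_
    rw [← lintegral_const_mul' _ _ ENNReal.ofReal_ne_top]
    exact setLIntegral_congr_fun hS fun w hw => by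
      rw [zeroExt_emb hx, zeroExt_of_mem_preimage hDΩ hw, sub_zero, div_eq_mul_inv,
        ENNReal.ofReal_mul (by positivity)]
  have hSS : ∫⁻ z in projInit n ⁻¹' D, ∫⁻ w in projInit n ⁻¹' D,
      ENNReal.ofReal (|zeroExt Ω f z - zeroExt Ω f w| ^ p / dist z w ^ α) ∂μH[n] ∂μH[n] = 0 :=
    setLIntegral_eq_zero hS fun z hz => setLIntegral_eq_zero hS fun w hw => by
      simp [zeroExt_of_mem_preimage hDΩ hz, zeroExt_of_mem_preimage hDΩ hw, Real.zero_rpow hp]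
  refine (lintegral_lintegral_union_le_of_symm hG fun z w => ?_).trans_eq ?_
  · rw [abs_sub_comm, dist_comm]
  · rw [hPP, hPS, hSS, add_zero]

end ZeroExtension

theorem stmt_12_general {n : ℕ} (s p : ℝ) (hs : s ∈ Set.Ioo (0:ℝ) 1) (hp : 1 < p)
    (Ω D : Set (EuclideanSpace ℝ (Fin n)))
    (hΩopen : IsOpen Ω)
    (hD : IsClosed D) (hDsub : D ⊆ frontier Ω)
    (S ΩD : Set (EuclideanSpace ℝ (Fin (n + 1))))
    (hS : S = {w | ∃ x ∈ D, ∃ t : ℝ, w = emb n x t})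
    (hΩD : ΩD = {w | ∃ x ∈ Ω, w = emb n x 0} ∪ S)
    (A : ℝ)
    (hnset : ∀ z ∈ S, ∀ r : ℝ, 0 < r →
      ENNReal.ofReal (r ^ n / A) ≤ μH[(n : ℝ)] (S ∩ ball z r) ∧
        μH[(n : ℝ)] (S ∩ ball z r) ≤ ENNReal.ofReal (A * r ^ n)) :
    ∃ C : ℝ, 0 < C ∧
    ∀ (f : EuclideanSpace ℝ (Fin n) → ℝ), Measurable f →
    ∀ F : EuclideanSpace ℝ (Fin (n + 1)) → ℝ,
      (F = fun z => if z (Fin.last n) = 0 ∧ projInit n z ∈ Ω then f (projInit n z) else 0) →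
      (∫⁻ z in ΩD, ENNReal.ofReal (|F z| ^ p) ∂μH[(n : ℝ)]) ^ (1 / p) +
        (∫⁻ z in ΩD, ∫⁻ w in ΩD,
          ENNReal.ofReal (|F z - F w| ^ p / dist z w ^ ((n : ℝ) + s * p))
            ∂μH[(n : ℝ)] ∂μH[(n : ℝ)]) ^ (1 / p)
      ≤ ENNReal.ofReal C *
        ((∫⁻ x in Ω, ENNReal.ofReal (|f x| ^ p)) ^ (1 / p) +
         (∫⁻ x in Ω, ∫⁻ y in Ω,
            ENNReal.ofReal (|f x - f y| ^ p / dist x y ^ ((n : ℝ) + s * p))) ^ (1 / p) +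
         (∫⁻ x in Ω, ENNReal.ofReal (|f x| ^ p / infDist x D ^ (s * p))) ^ (1 / p)) := by
  have hp0 : 0 < p := one_pos.trans hp
  have hsp : 0 < s * p := mul_pos hs.1 hp0
  subst hS hΩD
  rw [setOf_emb_eq_preimage_projInit] at hnset ⊢
  rw [setOf_emb_eq_image]
  have hDΩ : Disjoint D Ω := (disjoint_frontier_iff_isOpen.2 hΩopen).mono_left hDsub
  have hreg : IsUpperAhlforsRegular μH[n] (projInit n ⁻¹' D) A n := fun z hz r hr => by
    rw [Real.rpow_natCast]; exact (hnset z hz r hr).2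
  have := hreg.sigmaFinite_restrict
  obtain ⟨c, hc⟩ : ∃ c : ℝ≥0, (μH[n] : Measure (EuclideanSpace ℝ (Fin n))) = c • volume :=
    ⟨_, Measure.isAddLeftInvariant_eq_smul _ _⟩
  have hsmul (g : EuclideanSpace ℝ (Fin n) → ℝ≥0∞) :
      ∫⁻ x in Ω, g x ∂μH[n] = c * ∫⁻ x in Ω, g x := by
    rw [hc, setLIntegral_smul_measure]; rfl
  set K := ENNReal.ofReal (A * 4 ^ (n : ℝ)) * (1 - ENNReal.ofReal ((2 ^ (s * p))⁻¹))⁻¹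
  have hK : K ≠ ⊤ :=
    ENNReal.mul_ne_top ENNReal.ofReal_ne_top (ENNReal.inv_one_sub_ofReal_inv_two_rpow_ne_top hsp)
  obtain ⟨C, hC, hCle⟩ := ENNReal.exists_pos_rpow_add_rpow_le (by positivity)
    ((div_le_one hp0).2 hp.le) (B₁ := c) (B₂ := c ^ 2) (B₃ := 2 * K * c) (by simp) (by simp)
    (by finiteness)
  refine ⟨C, hC, fun f hf F hF => ?_⟩
  obtain rfl : F = zeroExt Ω f := hF
  refine hCle _ _ _ _ _ ?_ ?_
  · exact (setLIntegral_zeroExt_le hΩopen.measurableSet hD hDΩ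
      (g := fun u => ENNReal.ofReal (|u| ^ p)) (by simp [Real.zero_rpow hp0.ne'])).trans_eq (hsmul _)
  · grw [lintegral_lintegral_zeroExt_le hΩopen.measurableSet hD hDΩ hf hp0.ne',
      setLIntegral_mul_lintegral_inv_dist_emb_rpow_le hreg hΩopen.measurableSet hD hDΩ
        (by positivity) hsp]
    simp only [hsmul, lintegral_const_mul' _ _ ENNReal.coe_ne_top]
    exact le_of_eq (by ring)

/-- The zero extension `E₀f` of `f : Ω → ℝ` to `Ω_D = (Ω×{0}) ∪ (D×ℝ)` is bounded from the
weighted fractional Sobolev space on `Ω` into `W^{s,p}(Ω_D)` (with respect to the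
`n`-dimensional Hausdorff measure), provided `D×ℝ` is an `n`-set in `ℝ^{n+1}`. -/
theorem stmt_12 {n : ℕ} (s p : ℝ) (hs : s ∈ Set.Ioo (0:ℝ) 1) (hp : 1 < p)
    (Ω D : Set (EuclideanSpace ℝ (Fin n)))
    (hΩopen : IsOpen Ω) (hΩconn : IsConnected Ω)
    (hD : IsClosed D) (hDsub : D ⊆ frontier Ω)
    (S ΩD : Set (EuclideanSpace ℝ (Fin (n + 1))))
    (hS : S = {w | ∃ x ∈ D, ∃ t : ℝ, w = emb n x t})
    (hΩD : ΩD = {w | ∃ x ∈ Ω, w = emb n x 0} ∪ S)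
    (A : ℝ) (hA : 1 ≤ A)
    (hnset : ∀ z ∈ S, ∀ r : ℝ, 0 < r →
      ENNReal.ofReal (r ^ n / A) ≤ μH[(n : ℝ)] (S ∩ ball z r) ∧
        μH[(n : ℝ)] (S ∩ ball z r) ≤ ENNReal.ofReal (A * r ^ n)) :
    ∃ C : ℝ, 0 < C ∧
    ∀ (f : EuclideanSpace ℝ (Fin n) → ℝ), Measurable f →
    ∀ F : EuclideanSpace ℝ (Fin (n + 1)) → ℝ,
      (F = fun z => if z (Fin.last n) = 0 ∧ projInit n z ∈ Ω then f (projInit n z) else 0) →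
      (∫⁻ z in ΩD, ENNReal.ofReal (|F z| ^ p) ∂μH[(n : ℝ)]) ^ (1 / p) +
        (∫⁻ z in ΩD, ∫⁻ w in ΩD,
          ENNReal.ofReal (|F z - F w| ^ p / dist z w ^ ((n : ℝ) + s * p))
            ∂μH[(n : ℝ)] ∂μH[(n : ℝ)]) ^ (1 / p)
      ≤ ENNReal.ofReal C *
        ((∫⁻ x in Ω, ENNReal.ofReal (|f x| ^ p)) ^ (1 / p) +
         (∫⁻ x in Ω, ∫⁻ y in Ω,
            ENNReal.ofReal (|f x - f y| ^ p / dist x y ^ ((n : ℝ) + s * p))) ^ (1 / p) +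
         (∫⁻ x in Ω, ENNReal.ofReal (|f x| ^ p / infDist x D ^ (s * p))) ^ (1 / p)) :=
  stmt_12_general s p hs hp Ω D hΩopen hD hDsub S ΩD hS hΩD A hnset
end

section
/- Let Ω ⊂ ℝⁿ be a domain supporting the ∂Ω-adapted fractional Hardy inequality: for all f with finite intrinsic norm in W^{s,p}(Ω), ∫_Ω |f(x)|^p dist(x,∂Ω)^{−sp} dx ≤ C ‖f‖^p_{W^{s,p}(Ω)} (s ∈ (0,1), p ∈ [1,∞)). Then the zero extension E₀f (extending f ∈ W^{s,p}(Ω) by 0 to ℝⁿ) satisfies ‖E₀f‖_{W^{s,p}(ℝⁿ)} ≤ C' ‖f‖_{W^{s,p}(Ω)}. Key step: ∫_Ω ∫_{ℝⁿ∖Ω} |f(x)|^p / |x−y|^{n+sp} dy dx ≤ C(n,s,p) ∫_Ω |f(x)|^p dist(x,∂Ω)^{−sp} dx. -/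
/-!
For `x ∈ Ω`, every `y ∉ Ω` lies outside the ball of radius `d = dist(x, ∂Ω)` about `x`, and in
polar coordinates `∫_{|y - x| ≥ d} |x - y|^{-(n+σ)} dy = n |B₁| d^{-σ} / σ`; integrating this
against `|f(x)|^p` bounds the cross term by the Hardy integral. The Gagliardo double integral of
the zero extension is the one over `Ω × Ω` plus twice the cross term (the `Ωᶜ × Ωᶜ` part
vanishes), so subadditivity of `t ↦ t^{1/p}` and the Hardy inequality bound it by a multiple of
the norm on `Ω`.
-/

open Metric Set MeasureTheory
open scoped ENNReal

/-- The intrinsic (Gagliardo) fractional Sobolev norm on a set `U`. -/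
noncomputable def gagNorm (n : ℕ) (s p : ℝ) (U : Set (EuclideanSpace ℝ (Fin n)))
    (f : EuclideanSpace ℝ (Fin n) → ℝ) : ℝ≥0∞ :=
  (∫⁻ x in U, ENNReal.ofReal (|f x| ^ p)) ^ (1 / p) +
    (∫⁻ x in U, ∫⁻ y in U,
      ENNReal.ofReal (|f x - f y| ^ p / dist x y ^ ((n : ℝ) + s * p))) ^ (1 / p)

open Module

section HardyCrossTerm

variable {E : Type*} [NormedAddCommGroup E] [NormedSpace ℝ E] [FiniteDimensional ℝ E]
  [MeasurableSpace E] [BorelSpace E]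

lemma rpow_natCast_sub_one_mul_rpow_neg_add {N : ℕ} (hN : 0 < N) {r : ℝ} (hr : 0 < r) (σ : ℝ) :
    r ^ (N - 1) * r ^ (-((N : ℝ) + σ)) = r ^ (-σ - 1) := by
  rw [← Real.rpow_natCast, ← Real.rpow_add hr, Nat.cast_sub hN, Nat.cast_one]
  ring_nf

lemma lintegral_compl_ball_norm_rpow_neg (μ : Measure E) [μ.IsAddHaarMeasure] {σ d : ℝ}
    (hσ : 0 < σ) (hd : 0 < d) :
    ∫⁻ y in (ball 0 d)ᶜ, ENNReal.ofReal (‖y‖ ^ (-((finrank ℝ E : ℝ) + σ))) ∂μ =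
      ENNReal.ofReal (finrank ℝ E * μ.real (ball 0 1) * (d ^ (-σ) / σ)) := by
  rcases subsingleton_or_nontrivial E with _ | _
  · have : (ball (0 : E) d)ᶜ = ∅ :=
      compl_empty_iff.2 <| eq_univ_of_forall fun y ↦ by simp [Subsingleton.elim y 0, hd]
    simp [this, finrank_zero_of_subsingleton]
  set g : ℝ → ℝ := (Ici d).indicator fun r ↦ r ^ (-((finrank ℝ E : ℝ) + σ))
  have hg : ∀ r ∈ Ioi (0 : ℝ),
      r ^ (finrank ℝ E - 1) • g r = (Ici d).indicator (· ^ (-σ - 1)) r := by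
    intro r hr
    by_cases hrd : r ∈ Ici d
    · simp only [g, indicator_of_mem hrd, smul_eq_mul]
      exact rpow_natCast_sub_one_mul_rpow_neg_add finrank_pos hr σ
    · simp [g, hrd]
  have hint : IntegrableOn (fun r : ℝ ↦ r ^ (finrank ℝ E - 1) • g r) (Ioi 0) := by
    rw [integrableOn_congr_fun hg measurableSet_Ioi, integrableOn_indicator_iff measurableSet_Ici,
      inter_eq_left.2 (Ici_subset_Ioi.2 hd), integrableOn_Ici_iff_integrableOn_Ioi]
    exact integrableOn_Ioi_rpow_of_lt (by linarith) hd
  have hlintegral : ∫⁻ y in (ball 0 d)ᶜ, ENNReal.ofReal (‖y‖ ^ (-((finrank ℝ E : ℝ) + σ))) ∂μ =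
      ∫⁻ y, ENNReal.ofReal (g ‖y‖) ∂μ := by
    rw [← lintegral_indicator measurableSet_ball.compl]
    congr with y
    by_cases hy : d ≤ ‖y‖ <;> simp [g, hy]
  rw [hlintegral, ← ofReal_integral_eq_lintegral_ofReal ((integrable_fun_norm_addHaar μ).2 hint)
    (ae_of_all _ fun y ↦ ?_), integral_fun_norm_addHaar μ g,
    setIntegral_congr_fun measurableSet_Ioi hg]
  · rw [setIntegral_indicator measurableSet_Ici, inter_eq_right.2 (Ici_subset_Ioi.2 hd),
      integral_Ici_eq_integral_Ioi, integral_Ioi_rpow_of_lt (by linarith) hd, nsmul_eq_mul,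
      smul_eq_mul, mul_assoc]
    congr 3
    ring_nf
  · exact indicator_nonneg (fun r hr ↦ Real.rpow_nonneg (hd.le.trans hr) _) _

lemma lintegral_compl_ball_dist_rpow_neg (μ : Measure E) [μ.IsAddHaarMeasure] {σ d : ℝ}
    (hσ : 0 < σ) (hd : 0 < d) (x : E) :
    ∫⁻ y in (ball x d)ᶜ, ENNReal.ofReal (dist y x ^ (-((finrank ℝ E : ℝ) + σ))) ∂μ =
      ENNReal.ofReal (finrank ℝ E * μ.real (ball 0 1) * (d ^ (-σ) / σ)) := by
  rw [← lintegral_compl_ball_norm_rpow_neg μ hσ hd, ← lintegral_indicator measurableSet_ball.compl,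
    ← lintegral_indicator measurableSet_ball.compl,
    ← lintegral_add_right_eq_self _ x]
  congr with y
  simp [indicator, mem_ball, dist_eq_norm]

lemma lintegral_compl_div_dist_rpow_le (μ : Measure E) [μ.IsAddHaarMeasure] {Ω : Set E}
    (hΩ : IsOpen Ω) {x : E} (hx : x ∈ Ω) {σ a : ℝ} (hσ : 0 < σ) (ha : 0 ≤ a) :
    ∫⁻ y in Ωᶜ, ENNReal.ofReal (a / dist x y ^ ((finrank ℝ E : ℝ) + σ)) ∂μ ≤
      ENNReal.ofReal (finrank ℝ E * μ.real (ball 0 1) / σ) *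
        ENNReal.ofReal (a / infDist x (frontier Ω) ^ σ) := by
  rcases eq_or_ne Ω univ with rfl | hΩu
  · simp
  obtain ⟨w, hw, hxw⟩ := exists_mem_frontier_infDist_compl_eq_dist hx hΩu
  set d := infDist x (frontier Ω)
  have hd : 0 < d := (isClosed_frontier.notMem_iff_infDist_pos ⟨w, hw⟩).1
    fun hxf ↦ (hΩ.inter_frontier_eq.subset ⟨hx, hxf⟩ : x ∈ (∅ : Set E))
  have hsub : Ωᶜ ⊆ (ball x d)ᶜ := fun y hy hyd ↦ by
    have := (infDist_le_dist_of_mem hw).trans (hxw.symm.le.trans (infDist_le_dist_of_mem hy))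
    rw [mem_ball, dist_comm] at hyd
    linarith
  calc ∫⁻ y in Ωᶜ, ENNReal.ofReal (a / dist x y ^ ((finrank ℝ E : ℝ) + σ)) ∂μ
      = ∫⁻ y in Ωᶜ, ENNReal.ofReal a *
          ENNReal.ofReal (dist y x ^ (-((finrank ℝ E : ℝ) + σ))) ∂μ := by
        congr with y
        rw [← ENNReal.ofReal_mul ha, Real.rpow_neg dist_nonneg, dist_comm, div_eq_mul_inv]
    _ ≤ ∫⁻ y in (ball x d)ᶜ, ENNReal.ofReal a *
          ENNReal.ofReal (dist y x ^ (-((finrank ℝ E : ℝ) + σ))) ∂μ := lintegral_mono_set hsub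
    _ = ENNReal.ofReal a * ENNReal.ofReal (finrank ℝ E * μ.real (ball 0 1) * (d ^ (-σ) / σ)) := by
        rw [lintegral_const_mul' _ _ ENNReal.ofReal_ne_top,
          lintegral_compl_ball_dist_rpow_neg μ hσ hd]
    _ = _ := by
        rw [← ENNReal.ofReal_mul ha, ← ENNReal.ofReal_mul (by positivity), Real.rpow_neg hd.le]
        ring_nf

lemma lintegral_lintegral_compl_div_dist_rpow_le (μ : Measure E) [μ.IsAddHaarMeasure] {Ω : Set E}
    (hΩ : IsOpen Ω) {σ : ℝ} (hσ : 0 < σ) (g : E → ℝ) (hg : ∀ x, 0 ≤ g x) :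
    ∫⁻ x in Ω, ∫⁻ y in Ωᶜ, ENNReal.ofReal (g x / dist x y ^ ((finrank ℝ E : ℝ) + σ)) ∂μ ∂μ ≤
      ENNReal.ofReal (finrank ℝ E * μ.real (ball 0 1) / σ) *
        ∫⁻ x in Ω, ENNReal.ofReal (g x / infDist x (frontier Ω) ^ σ) ∂μ := by
  rw [← lintegral_const_mul' _ _ ENNReal.ofReal_ne_top]
  exact setLIntegral_mono' hΩ.measurableSet fun x hx ↦
    lintegral_compl_div_dist_rpow_le μ hΩ hx hσ (hg x)

end HardyCrossTerm

section ZeroExtension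

variable {α : Type*} [MeasurableSpace α] {μ : Measure α} {Ω : Set α} {f : α → ℝ} {p : ℝ}

lemma lintegral_ofReal_abs_indicator_rpow (hΩ : MeasurableSet Ω) (hp : 0 < p) :
    ∫⁻ x, ENNReal.ofReal (|Ω.indicator f x| ^ p) ∂μ = ∫⁻ x in Ω, ENNReal.ofReal (|f x| ^ p) ∂μ := by
  rw [← lintegral_indicator hΩ]
  congr with x
  by_cases hx : x ∈ Ω <;> simp [hx, Real.zero_rpow hp.ne']

variable [PseudoMetricSpace α] [SecondCountableTopology α] [OpensMeasurableSpace α] [SFinite μ]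

lemma lintegral_lintegral_indicator_sub (hΩ : MeasurableSet Ω) (hf : Measurable f) (hp : 0 < p)
    (r : ℝ) :
    ∫⁻ x, ∫⁻ y, ENNReal.ofReal (|Ω.indicator f x - Ω.indicator f y| ^ p / dist x y ^ r) ∂μ ∂μ =
      ∫⁻ x in Ω, ∫⁻ y in Ω, ENNReal.ofReal (|f x - f y| ^ p / dist x y ^ r) ∂μ ∂μ +
        2 * ∫⁻ x in Ω, ∫⁻ y in Ωᶜ, ENNReal.ofReal (|f x| ^ p / dist x y ^ r) ∂μ ∂μ := by
  set H : α → α → ℝ≥0∞ := fun x y ↦ ENNReal.ofReal (|f x| ^ p / dist x y ^ r)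
  have hH : Measurable (Function.uncurry H) := by
    unfold H; fun_prop
  have hH_inner : Measurable fun x ↦ ∫⁻ y in Ωᶜ, H x y ∂μ := hH.lintegral_prod_right'
  have inner_mem : ∀ x ∈ Ω,
      ∫⁻ y, ENNReal.ofReal (|Ω.indicator f x - Ω.indicator f y| ^ p / dist x y ^ r) ∂μ =
        ∫⁻ y in Ω, ENNReal.ofReal (|f x - f y| ^ p / dist x y ^ r) ∂μ + ∫⁻ y in Ωᶜ, H x y ∂μ := by
    intro x hx
    rw [← lintegral_add_compl _ hΩ]
    congr 1
    · exact setLIntegral_congr_fun hΩ fun y hy ↦ by simp [hx, hy]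
    · exact setLIntegral_congr_fun hΩ.compl fun y hy ↦ by simp [H, hx, indicator_of_notMem hy]
  have inner_notMem : ∀ x ∈ Ωᶜ,
      ∫⁻ y, ENNReal.ofReal (|Ω.indicator f x - Ω.indicator f y| ^ p / dist x y ^ r) ∂μ =
        ∫⁻ y in Ω, H y x ∂μ := by
    intro x hx
    rw [← lintegral_indicator hΩ]
    congr with y
    by_cases hy : y ∈ Ω <;> simp [H, indicator_of_notMem hx, hy, dist_comm, Real.zero_rpow hp.ne']
  rw [← lintegral_add_compl _ hΩ, setLIntegral_congr_fun hΩ inner_mem,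
    setLIntegral_congr_fun hΩ.compl inner_notMem, lintegral_add_right _ hH_inner,
    lintegral_lintegral_swap (f := fun x y ↦ H y x) (hH.comp measurable_swap).aemeasurable,
    two_mul, add_assoc]

end ZeroExtension

lemma gagNorm_indicator_le {n : ℕ} {s p : ℝ} {Ω : Set (EuclideanSpace ℝ (Fin n))}
    {f : EuclideanSpace ℝ (Fin n) → ℝ} (hΩ : MeasurableSet Ω) (hf : Measurable f) (hp : 1 ≤ p)
    {A : ℝ≥0∞} (hcross : ∫⁻ x in Ω, ∫⁻ y in Ωᶜ,
      ENNReal.ofReal (|f x| ^ p / dist x y ^ ((n : ℝ) + s * p)) ≤ A * gagNorm n s p Ω f ^ p) :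
    gagNorm n s p univ (Ω.indicator f) ≤ (1 + (2 * A) ^ (1 / p)) * gagNorm n s p Ω f := by
  have hp0 : 0 < p := zero_lt_one.trans_le hp
  set G := gagNorm n s p Ω f
  set D := ∫⁻ x in Ω, ∫⁻ y in Ω, ENNReal.ofReal (|f x - f y| ^ p / dist x y ^ ((n : ℝ) + s * p))
  calc gagNorm n s p univ (Ω.indicator f)
      = (∫⁻ x in Ω, ENNReal.ofReal (|f x| ^ p)) ^ (1 / p) + (D + 2 * ∫⁻ x in Ω, ∫⁻ y in Ωᶜ,
          ENNReal.ofReal (|f x| ^ p / dist x y ^ ((n : ℝ) + s * p))) ^ (1 / p) := by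
        rw [gagNorm, Measure.restrict_univ, lintegral_ofReal_abs_indicator_rpow hΩ hp0,
          lintegral_lintegral_indicator_sub hΩ hf hp0]
    _ ≤ (∫⁻ x in Ω, ENNReal.ofReal (|f x| ^ p)) ^ (1 / p) +
          (D ^ (1 / p) + (2 * (A * G ^ p)) ^ (1 / p)) := by
        gcongr
        exact (ENNReal.rpow_add_le_add_rpow _ _ (by positivity) ((div_le_one hp0).2 hp)).trans
          (by gcongr)
    _ = (1 + (2 * A) ^ (1 / p)) * G := by
        rw [← mul_assoc, ENNReal.mul_rpow_of_nonneg _ _ (by positivity), ← ENNReal.rpow_mul,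
          mul_one_div_cancel hp0.ne', ENNReal.rpow_one]
        simp only [G, gagNorm, D]
        ring

theorem stmt_13_general {n : ℕ} (s p C₀ : ℝ) (hs : s ∈ Set.Ioo (0:ℝ) 1) (hp : 1 ≤ p)
    (Ω : Set (EuclideanSpace ℝ (Fin n)))
    (hΩopen : IsOpen Ω)
    (hardy : ∀ f : EuclideanSpace ℝ (Fin n) → ℝ, Measurable f →
      gagNorm n s p Ω f ≠ ⊤ →
      ∫⁻ x in Ω, ENNReal.ofReal (|f x| ^ p / infDist x (frontier Ω) ^ (s * p)) ≤
        ENNReal.ofReal C₀ * (gagNorm n s p Ω f) ^ p) :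
    ∃ C' : ℝ, 0 < C' ∧ ∀ f : EuclideanSpace ℝ (Fin n) → ℝ, Measurable f →
      (∫⁻ x in Ω, ∫⁻ y in Ωᶜ,
          ENNReal.ofReal (|f x| ^ p / dist x y ^ ((n : ℝ) + s * p)))
        ≤ ENNReal.ofReal C' *
          ∫⁻ x in Ω, ENNReal.ofReal (|f x| ^ p / infDist x (frontier Ω) ^ (s * p)) ∧
      gagNorm n s p Set.univ (Ω.indicator f) ≤ ENNReal.ofReal C' * gagNorm n s p Ω f := by
  have hσ : 0 < s * p := mul_pos hs.1 (zero_lt_one.trans_le hp)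
  set K := ENNReal.ofReal (n * volume.real (ball (0 : EuclideanSpace ℝ (Fin n)) 1) / (s * p))
  have cross : ∀ f : EuclideanSpace ℝ (Fin n) → ℝ,
      ∫⁻ x in Ω, ∫⁻ y in Ωᶜ, ENNReal.ofReal (|f x| ^ p / dist x y ^ ((n : ℝ) + s * p)) ≤
        K * ∫⁻ x in Ω, ENNReal.ofReal (|f x| ^ p / infDist x (frontier Ω) ^ (s * p)) := by
    intro f
    simpa only [finrank_euclideanSpace_fin] using
      lintegral_lintegral_compl_div_dist_rpow_le volume hΩopen hσ (fun x ↦ |f x| ^ p)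
        fun x ↦ by positivity
  obtain ⟨C', hC'pos, hC'⟩ : ∃ C' : ℝ, 0 < C' ∧
      K + (1 + (2 * (K * ENNReal.ofReal C₀)) ^ (1 / p)) ≤ ENNReal.ofReal C' := by
    set c := K + (1 + (2 * (K * ENNReal.ofReal C₀)) ^ (1 / p))
    have hc : c ≠ ⊤ := by finiteness
    exact ⟨c.toReal + 1, by positivity, ENNReal.le_ofReal_iff_toReal_le hc (by positivity) |>.2
      (by linarith)⟩
  refine ⟨C', hC'pos, fun f hf ↦ ⟨(cross f).trans (by gcongr; exact le_self_add.trans hC'), ?_⟩⟩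
  by_cases hG : gagNorm n s p Ω f = ⊤
  · simp [hG, hC'pos]
  calc gagNorm n s p univ (Ω.indicator f)
      ≤ (1 + (2 * (K * ENNReal.ofReal C₀)) ^ (1 / p)) * gagNorm n s p Ω f :=
        gagNorm_indicator_le hΩopen.measurableSet hf hp <|
          (cross f).trans <| by rw [mul_assoc]; gcongr; exact hardy f hf hG
    _ ≤ ENNReal.ofReal C' * gagNorm n s p Ω f := by gcongr; exact le_add_self.trans hC'

/-- If `Ω` supports the `∂Ω`-adapted fractional Hardy inequality, then the zero extension
is bounded from `W^{s,p}(Ω)` to `W^{s,p}(ℝⁿ)`; the key step is the cross-term bound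
`∫_Ω ∫_{Ωᶜ} |f(x)|^p |x-y|^{-(n+sp)} dy dx ≲ ∫_Ω |f(x)|^p dist(x,∂Ω)^{-sp} dx`. -/
theorem stmt_13 {n : ℕ} (s p C₀ : ℝ) (hs : s ∈ Set.Ioo (0:ℝ) 1) (hp : 1 ≤ p)
    (hC₀ : 0 < C₀) (Ω : Set (EuclideanSpace ℝ (Fin n)))
    (hΩopen : IsOpen Ω) (hΩconn : IsConnected Ω)
    (hardy : ∀ f : EuclideanSpace ℝ (Fin n) → ℝ, Measurable f →
      gagNorm n s p Ω f ≠ ⊤ →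
      ∫⁻ x in Ω, ENNReal.ofReal (|f x| ^ p / infDist x (frontier Ω) ^ (s * p)) ≤
        ENNReal.ofReal C₀ * (gagNorm n s p Ω f) ^ p) :
    ∃ C' : ℝ, 0 < C' ∧ ∀ f : EuclideanSpace ℝ (Fin n) → ℝ, Measurable f →
      (∫⁻ x in Ω, ∫⁻ y in Ωᶜ,
          ENNReal.ofReal (|f x| ^ p / dist x y ^ ((n : ℝ) + s * p)))
        ≤ ENNReal.ofReal C' *
          ∫⁻ x in Ω, ENNReal.ofReal (|f x| ^ p / infDist x (frontier Ω) ^ (s * p)) ∧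
      gagNorm n s p Set.univ (Ω.indicator f) ≤ ENNReal.ofReal C' * gagNorm n s p Ω f :=
  stmt_13_general s p C₀ hs hp Ω hΩopen hardy
end

section
/- Let W be a Whitney decomposition of an open set O ⊊ ℝⁿ into axis-parallel dyadic cubes with pairwise disjoint interiors such that diam Q ≤ dist(Q, ∂O) ≤ 4 diam Q for all Q ∈ W. Then whenever two cubes Q, R ∈ W have intersecting closures, (1/4) diam Q ≤ diam R ≤ 4 diam Q, and each cube Q ∈ W has at most 12ⁿ cubes in W whose closures intersect its closure. -/
/-!
For touching cubes `Q, R` of the decomposition, Whitney's condition and the triangle inequality give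
`diam Q ≤ dist(Q, ∂O) ≤ diam R + dist(R, ∂O) ≤ 5 diam R`. Diameters of dyadic cubes are `√n` times
powers of two, so this improves to `diam Q ≤ 4 diam R`: the generation of `R` exceeds that of `Q`
by at most two. Hence every neighbour of `Q` contains one of the `6ⁿ` cubes of generation two
higher lying next to `Q`, and since the interiors are disjoint no two neighbours contain the same
one.
-/

open Metric Set

/-- Distance between two sets. -/
noncomputable def setDist {α : Type*} [PseudoMetricSpace α] (s t : Set α) : ℝ :=
  sInf (Set.image2 dist s t)

/-- The closed dyadic cube `2^{-k}(m + [0,1]ⁿ)`. -/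
def dyadicCube (n : ℕ) (k : ℤ) (m : Fin n → ℤ) : Set (EuclideanSpace ℝ (Fin n)) :=
  {x | ∀ i, (m i : ℝ) * (2 : ℝ) ^ (-k) ≤ x i ∧ x i ≤ ((m i : ℝ) + 1) * (2 : ℝ) ^ (-k)}

lemma setDist_le_diam_add_setDist {α : Type*} [PseudoMetricSpace α] {Q R F : Set α}
    (hQR : (Q ∩ R).Nonempty) (hR : Bornology.IsBounded R) (hF : F.Nonempty) :
    setDist Q F ≤ diam R + setDist R F := by
  obtain ⟨x, hxQ, hxR⟩ := hQR
  have hbdd : BddBelow (image2 dist Q F) := ⟨0, forall_mem_image2.2 fun _ _ _ _ => dist_nonneg⟩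
  rw [← sub_le_iff_le_add']
  refine le_csInf (Nonempty.image2 ⟨x, hxR⟩ hF) (forall_mem_image2.2 fun r hr y hy => ?_)
  calc setDist Q F - diam R ≤ dist x y - dist x r :=
        sub_le_sub (csInf_le hbdd (mem_image2_of_mem hxQ hy)) (dist_le_diam_of_mem hR hxR hr)
    _ ≤ dist r y := by linarith [dist_triangle x r y]

lemma diam_le_five_mul_diam_of_whitney {α : Type*} [PseudoMetricSpace α] {Q R F : Set α}
    (hQR : (Q ∩ R).Nonempty) (hR : Bornology.IsBounded R) (hF : F.Nonempty)
    (hQ : diam Q ≤ setDist Q F) (hRF : setDist R F ≤ 4 * diam R) : diam Q ≤ 5 * diam R := by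
  linarith [setDist_le_diam_add_setDist hQR hR hF]

lemma two_zpow_neg_le_four_mul_iff {k k' : ℤ} : (2 : ℝ) ^ (-k) ≤ 4 * 2 ^ (-k') ↔ k' ≤ k + 2 := by
  rw [show (4 : ℝ) * 2 ^ (-k') = 2 ^ (2 + -k') by rw [zpow_add₀ two_ne_zero]; norm_num,
    zpow_le_zpow_iff_right₀ one_lt_two]
  omega

lemma two_zpow_neg_le_five_mul_iff {k k' : ℤ} : (2 : ℝ) ^ (-k) ≤ 5 * 2 ^ (-k') ↔ k' ≤ k + 2 := by
  refine ⟨fun h => ?_, fun h => (two_zpow_neg_le_four_mul_iff.2 h).trans (by gcongr; norm_num)⟩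
  by_contra! hlt
  have h8 : (2 : ℝ) ^ (-k') * 8 ≤ 2 ^ (-k) := by
    rw [show (2 : ℝ) ^ (-k') * 8 = 2 ^ (-k' + 3) by rw [zpow_add₀ two_ne_zero]; norm_num]
    exact zpow_le_zpow_right₀ one_le_two (by omega)
  have hpos : (0 : ℝ) < 2 ^ (-k') := by positivity
  linarith

lemma sqrt_sum_const_sq (n : ℕ) {s : ℝ} (hs : 0 ≤ s) : √(∑ _i : Fin n, s ^ 2) = √n * s := by
  rw [Finset.sum_const, Finset.card_univ, Fintype.card_fin, nsmul_eq_mul,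
    Real.sqrt_mul (Nat.cast_nonneg n), Real.sqrt_sq hs]

namespace dyadicCube

variable {n : ℕ} {k : ℤ} {m : Fin n → ℤ}

lemma mem_iff {x : EuclideanSpace ℝ (Fin n)} :
    x ∈ dyadicCube n k m ↔ ∀ i, (m i : ℝ) ≤ 2 ^ k * x i ∧ 2 ^ k * x i ≤ m i + 1 := by
  have h2k : (0 : ℝ) < 2 ^ k := by positivity
  simp only [dyadicCube, Set.mem_ofPred_eq, zpow_neg, ← div_eq_mul_inv, div_le_iff₀ h2k,
    le_div_iff₀ h2k, mul_comm (2 ^ k : ℝ)]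

lemma isClosed (n : ℕ) (k : ℤ) (m : Fin n → ℤ) : IsClosed (dyadicCube n k m) := by
  simp only [dyadicCube, Set.ofPred_and, Set.ofPred_forall]
  exact isClosed_iInter fun i =>
    (isClosed_le continuous_const (by fun_prop)).inter (isClosed_le (by fun_prop) continuous_const)

@[simp]
lemma closure_eq (n : ℕ) (k : ℤ) (m : Fin n → ℤ) : closure (dyadicCube n k m) = dyadicCube n k m :=
  (isClosed n k m).closure_eq

lemma dist_le {x y : EuclideanSpace ℝ (Fin n)} (hx : x ∈ dyadicCube n k m)
    (hy : y ∈ dyadicCube n k m) : dist x y ≤ √n * 2 ^ (-k) := by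
  have hcoord : ∀ i, dist (x i) (y i) ≤ 2 ^ (-k) := fun i => by
    rw [Real.dist_eq, abs_le]
    constructor <;> linarith [hx i, hy i]
  calc dist x y = √(∑ i, dist (x i) (y i) ^ 2) := EuclideanSpace.dist_eq x y
    _ ≤ √(∑ _i : Fin n, ((2 : ℝ) ^ (-k)) ^ 2) := by gcongr with i; exact hcoord i
    _ = √n * 2 ^ (-k) := sqrt_sum_const_sq n (by positivity)

lemma isBounded : Bornology.IsBounded (dyadicCube n k m) :=
  Metric.isBounded_iff.2 ⟨_, fun _ hx _ hy => dist_le hx hy⟩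

lemma diam_eq (n : ℕ) (k : ℤ) (m : Fin n → ℤ) : diam (dyadicCube n k m) = √n * 2 ^ (-k) := by
  refine le_antisymm (diam_le_of_forall_dist_le (by positivity) fun x hx y hy => dist_le hx hy) ?_
  set lo : EuclideanSpace ℝ (Fin n) := WithLp.toLp 2 fun i => (m i : ℝ) * 2 ^ (-k)
  set hi : EuclideanSpace ℝ (Fin n) := WithLp.toLp 2 fun i => ((m i : ℝ) + 1) * 2 ^ (-k)
  have hs : (0 : ℝ) < 2 ^ (-k) := by positivity
  have hlo : lo ∈ dyadicCube n k m := fun i => by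
    simp only [lo]; constructor <;> linarith
  have hhi : hi ∈ dyadicCube n k m := fun i => by
    simp only [hi]; constructor <;> linarith
  calc √n * 2 ^ (-k) = √(∑ _i : Fin n, ((2 : ℝ) ^ (-k)) ^ 2) := (sqrt_sum_const_sq n hs.le).symm
    _ = dist lo hi := by
      rw [EuclideanSpace.dist_eq]
      congr 1; refine Finset.sum_congr rfl fun i _ => ?_
      simp only [lo, hi, Real.dist_eq]
      rw [show (m i : ℝ) * 2 ^ (-k) - (m i + 1) * 2 ^ (-k) = -2 ^ (-k) by ring, abs_neg,
        abs_of_pos hs]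
    _ ≤ diam (dyadicCube n k m) := dist_le_diam_of_mem isBounded hlo hhi

lemma interior_nonempty (n : ℕ) (k : ℤ) (m : Fin n → ℤ) :
    (interior (dyadicCube n k m)).Nonempty := by
  have hs : (0 : ℝ) < 2 ^ (-k) := by positivity
  set c : EuclideanSpace ℝ (Fin n) := WithLp.toLp 2 fun i => ((m i : ℝ) + 1 / 2) * 2 ^ (-k)
  have hball : ball c (2 ^ (-k) / 2) ⊆ dyadicCube n k m := fun y hy i => by
    have hyi := (PiLp.dist_apply_le y c i).trans_lt hy
    rw [Real.dist_eq, abs_lt] at hyi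
    simp only [c] at hyi
    constructor <;> linarith [hyi.1, hyi.2]
  exact ⟨c, interior_maximal hball isOpen_ball (mem_ball_self (by positivity))⟩

lemma subset_of_index_bounds {t : ℕ} {p : Fin n → ℤ}
    (h : ∀ i, m i * 2 ^ t ≤ p i ∧ p i + 1 ≤ (m i + 1) * 2 ^ t) :
    dyadicCube n (k + t) p ⊆ dyadicCube n k m := by
  intro y hy
  rw [mem_iff] at hy ⊢
  intro i
  have h2t : (0 : ℝ) < 2 ^ t := by positivity
  have hlo : (m i : ℝ) * 2 ^ t ≤ p i := by exact_mod_cast (h i).1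
  have hhi : (p i : ℝ) + 1 ≤ (m i + 1) * 2 ^ t := by exact_mod_cast (h i).2
  have hyi := hy i
  rw [zpow_add₀ two_ne_zero, zpow_natCast, mul_right_comm] at hyi
  constructor
  · exact le_of_mul_le_mul_right (by linarith) h2t
  · exact le_of_mul_le_mul_right (by linarith) h2t

/-- The index box consists of the `6ⁿ` cubes of generation `k + 2` that meet `dyadicCube n k M`. -/
lemma exists_subset_of_mem_of_mem {k' : ℤ} {M m' : Fin n → ℤ} (hk : k' ≤ k + 2)
    {x : EuclideanSpace ℝ (Fin n)} (hxQ : x ∈ dyadicCube n k M) (hxR : x ∈ dyadicCube n k' m') :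
    ∃ p ∈ Fintype.piFinset fun i => Finset.Icc (4 * M i - 1) (4 * M i + 4),
      dyadicCube n (k + 2) p ⊆ dyadicCube n k' m' := by
  obtain ⟨t, ht⟩ := Int.le.dest hk
  rw [mem_iff] at hxQ hxR
  have hscale : (2 : ℝ) ^ k' * 2 ^ t = 4 * 2 ^ k := by
    rw [← zpow_natCast, ← zpow_add₀ two_ne_zero, ht, zpow_add₀ two_ne_zero]
    norm_num [mul_comm]
  have hbounds : ∀ i, m' i * 2 ^ t ≤ 4 * M i + 4 ∧ 4 * M i ≤ (m' i + 1) * 2 ^ t := fun i => by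
    obtain ⟨hQlo, hQhi⟩ := hxQ i
    obtain ⟨hRlo, hRhi⟩ := hxR i
    have h2t : (0 : ℝ) < 2 ^ t := by positivity
    have hy : 2 ^ k' * x i * 2 ^ t = 4 * (2 ^ k * x i) := by
      rw [mul_right_comm, hscale, mul_assoc]
    constructor
    · have : (m' i : ℝ) * 2 ^ t ≤ 4 * M i + 4 := by nlinarith
      exact_mod_cast this
    · have : 4 * (M i : ℝ) ≤ (m' i + 1) * 2 ^ t := by nlinarith
      exact_mod_cast this
  have hL : 1 ≤ (2 : ℤ) ^ t := one_le_pow₀ one_le_two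
  refine ⟨fun i => max (m' i * 2 ^ t) (4 * M i - 1), ?_, ht ▸ subset_of_index_bounds fun i => ?_⟩
  · simp only [Fintype.mem_piFinset, Finset.mem_Icc]
    exact fun i => by grind [hbounds i]
  · grind [hbounds i]

lemma diam_le_five_mul_diam_iff (hn : 0 < n) {k' : ℤ} {m' : Fin n → ℤ} :
    diam (dyadicCube n k m) ≤ 5 * diam (dyadicCube n k' m') ↔ k' ≤ k + 2 := by
  rw [diam_eq, diam_eq, mul_left_comm, mul_le_mul_iff_right₀ (by positivity)]
  exact two_zpow_neg_le_five_mul_iff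

lemma diam_le_four_mul_diam_iff (hn : 0 < n) {k' : ℤ} {m' : Fin n → ℤ} :
    diam (dyadicCube n k m) ≤ 4 * diam (dyadicCube n k' m') ↔ k' ≤ k + 2 := by
  rw [diam_eq, diam_eq, mul_left_comm, mul_le_mul_iff_right₀ (by positivity)]
  exact two_zpow_neg_le_four_mul_iff

lemma card_piFinset_Icc (M : Fin n → ℤ) :
    (Fintype.piFinset fun i => Finset.Icc (4 * M i - 1) (4 * M i + 4)).card = 6 ^ n := by
  have hcard : ∀ a : ℤ, (Finset.Icc (a - 1) (a + 4)).card = 6 := fun a => by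
    rw [Int.card_Icc]; omega
  simp [Fintype.card_piFinset, hcard]

lemma finite_and_ncard_le_of_forall_exists_subset {N : Set (Set (EuclideanSpace ℝ (Fin n)))}
    {T : Finset (Fin n → ℤ)} (hdisj : N.PairwiseDisjoint interior)
    (hsub : ∀ R ∈ N, ∃ p ∈ T, dyadicCube n k p ⊆ R) : N.Finite ∧ N.ncard ≤ T.card := by
  choose! f hfT hfR using hsub
  have hinj : InjOn f N := fun R hR R' hR' hRR' => by
    by_contra hne
    obtain ⟨z, hz⟩ := interior_nonempty n k (f R)
    exact disjoint_left.1 (hdisj hR hR' hne) (interior_mono (hfR R hR) hz)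
      (interior_mono (hRR' ▸ hfR R' hR') hz)
  exact ⟨Finite.of_injOn hfT hinj T.finite_toSet,
    (ncard_le_ncard_of_injOn f hfT hinj T.finite_toSet).trans_eq (ncard_coe_finset T)⟩

end dyadicCube

theorem stmt_15_general {n : ℕ} (O : Set (EuclideanSpace ℝ (Fin n)))
    (hOne : O.Nonempty) (hOproper : O ≠ Set.univ)
    (W : Set (Set (EuclideanSpace ℝ (Fin n))))
    (hdyadic : ∀ Q ∈ W, ∃ k m, Q = dyadicCube n k m)
    (hdisj : ∀ Q ∈ W, ∀ R ∈ W, Q ≠ R → interior Q ∩ interior R = ∅)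
    (hwhitney : ∀ Q ∈ W, Metric.diam Q ≤ setDist Q (frontier O) ∧
      setDist Q (frontier O) ≤ 4 * Metric.diam Q) :
    (∀ Q ∈ W, ∀ R ∈ W, (closure Q ∩ closure R).Nonempty →
      Metric.diam Q ≤ 4 * Metric.diam R ∧ Metric.diam R ≤ 4 * Metric.diam Q) ∧
    ∀ Q ∈ W, {R | R ∈ W ∧ (closure Q ∩ closure R).Nonempty}.Finite ∧
      {R | R ∈ W ∧ (closure Q ∩ closure R).Nonempty}.ncard ≤ 12 ^ n := by
  have hn : 0 < n := Nat.pos_of_ne_zero fun h => hOproper (by subst h; exact hOne.eq_univ)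
  have hF : (frontier O).Nonempty := nonempty_frontier_iff.2 ⟨hOne, hOproper⟩
  have hgen : ∀ k m k' m', dyadicCube n k m ∈ W → dyadicCube n k' m' ∈ W →
      (dyadicCube n k m ∩ dyadicCube n k' m').Nonempty → k' ≤ k + 2 := fun k m k' m' hQ hR hQR =>
    (dyadicCube.diam_le_five_mul_diam_iff hn).1 <| diam_le_five_mul_diam_of_whitney hQR
      dyadicCube.isBounded hF (hwhitney _ hQ).1 (hwhitney _ hR).2
  refine ⟨fun Q hQ R hR hQR => ?_, fun Q hQ => ?_⟩
  · obtain ⟨k, m, rfl⟩ := hdyadic Q hQ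
    obtain ⟨k', m', rfl⟩ := hdyadic R hR
    rw [dyadicCube.closure_eq, dyadicCube.closure_eq] at hQR
    rw [dyadicCube.diam_le_four_mul_diam_iff hn, dyadicCube.diam_le_four_mul_diam_iff hn]
    exact ⟨hgen k m k' m' hQ hR hQR, hgen k' m' k m hR hQ (inter_comm _ _ ▸ hQR)⟩
  · obtain ⟨k, M, rfl⟩ := hdyadic Q hQ
    have hcount := dyadicCube.finite_and_ncard_le_of_forall_exists_subset (k := k + 2)
      (N := {R | R ∈ W ∧ (closure (dyadicCube n k M) ∩ closure R).Nonempty})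
      (fun R hR R' hR' hne => disjoint_iff_inter_eq_empty.2 (hdisj R hR.1 R' hR'.1 hne))
      (fun R ⟨hR, hQR⟩ => by
        obtain ⟨k', m', rfl⟩ := hdyadic R hR
        rw [dyadicCube.closure_eq, dyadicCube.closure_eq] at hQR
        obtain ⟨x, hxQ, hxR⟩ := id hQR
        exact dyadicCube.exists_subset_of_mem_of_mem (hgen k M k' m' hQ hR hQR) hxQ hxR)
    rw [dyadicCube.card_piFinset_Icc] at hcount
    exact ⟨hcount.1, hcount.2.trans (Nat.pow_le_pow_left (by norm_num) n)⟩

/-- For a Whitney decomposition of an open set `O ⊊ ℝⁿ` into dyadic cubes with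
`diam Q ≤ dist(Q, ∂O) ≤ 4 diam Q`, touching cubes have comparable sizes
(`(1/4) diam Q ≤ diam R ≤ 4 diam Q`) and each cube has at most `12ⁿ` neighbours. -/
theorem stmt_15 {n : ℕ} (O : Set (EuclideanSpace ℝ (Fin n)))
    (hO : IsOpen O) (hOne : O.Nonempty) (hOproper : O ≠ Set.univ)
    (W : Set (Set (EuclideanSpace ℝ (Fin n))))
    (hdyadic : ∀ Q ∈ W, ∃ k m, Q = dyadicCube n k m)
    (hdisj : ∀ Q ∈ W, ∀ R ∈ W, Q ≠ R → interior Q ∩ interior R = ∅)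
    (hcover : ⋃₀ W = O)
    (hwhitney : ∀ Q ∈ W, Metric.diam Q ≤ setDist Q (frontier O) ∧
      setDist Q (frontier O) ≤ 4 * Metric.diam Q) :
    (∀ Q ∈ W, ∀ R ∈ W, (closure Q ∩ closure R).Nonempty →
      Metric.diam Q ≤ 4 * Metric.diam R ∧ Metric.diam R ≤ 4 * Metric.diam Q) ∧
    ∀ Q ∈ W, {R | R ∈ W ∧ (closure Q ∩ closure R).Nonempty}.Finite ∧
      {R | R ∈ W ∧ (closure Q ∩ closure R).Nonempty}.ncard ≤ 12 ^ n :=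
  stmt_15_general O hOne hOproper W hdyadic hdisj hwhitney
end
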